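/- Let A ∈ (ℝ ∪ {−∞})^{m×n} be a regular matrix, let p, q ∈ ℝ^m be regular vectors, let g ∈ (ℝ ∪ {−∞})ⁿ, and set Δ = ((A (q⁻ A)⁻)⁻ p)^{1/2} and μ = Δ ⊕ q⁻ A g. Then the minimum of q⁻ A x ⊕ (A x)⁻ p over all regular vectors x ∈ ℝⁿ with x ≥ g equals μ, and this minimum is attained at the vector x = μ (q⁻ A)⁻ (which satisfies x ≥ g). -/

import Mathlib

open Finset

noncomputable section

namespace MaxPlus

/-- Max-plus multiplicative inverse: `-a` for real `a`, `⊥` for `⊥`. -/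
def tinv (a : WithBot ℝ) : WithBot ℝ := WithBot.map (fun r => -r) a

/-- Max-plus rational power `a^(1/k) = a / k`. -/
def trt (a : WithBot ℝ) (k : ℕ) : WithBot ℝ := WithBot.map (fun r => r / (k : ℝ)) a

/-- A vector is regular if it has no `⊥` (= -∞) entries. -/
def Reg {n : ℕ} (x : Fin n → WithBot ℝ) : Prop := ∀ i, x i ≠ ⊥

/-- `cdot q x = q⁻ x`, the max-plus product of the conjugate row vector `q⁻` with `x`. -/
def cdot {n : ℕ} (q x : Fin n → WithBot ℝ) : WithBot ℝ :=
  Finset.univ.sup fun i => tinv (q i) + x i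

/-- Max-plus matrix-vector product. -/
def mulVec {m n : ℕ} (A : Matrix (Fin m) (Fin n) (WithBot ℝ)) (x : Fin n → WithBot ℝ) :
    Fin m → WithBot ℝ := fun i => Finset.univ.sup fun j => A i j + x j

/-- Max-plus matrix product. -/
def tmul {l m n : ℕ} (A : Matrix (Fin l) (Fin m) (WithBot ℝ))
    (B : Matrix (Fin m) (Fin n) (WithBot ℝ)) : Matrix (Fin l) (Fin n) (WithBot ℝ) :=
  fun i j => Finset.univ.sup fun k => A i k + B k j

/-- Multiplicative conjugate transpose of a matrix. -/
def conjM {m n : ℕ} (A : Matrix (Fin m) (Fin n) (WithBot ℝ)) :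
    Matrix (Fin n) (Fin m) (WithBot ℝ) := fun i j => tinv (A j i)

/-- Max-plus identity matrix. -/
def tId {n : ℕ} : Matrix (Fin n) (Fin n) (WithBot ℝ) := fun i j => if i = j then 0 else ⊥

/-- Max-plus matrix power. -/
def tpow {n : ℕ} (A : Matrix (Fin n) (Fin n) (WithBot ℝ)) : ℕ → Matrix (Fin n) (Fin n) (WithBot ℝ)
  | 0 => tId
  | k + 1 => tmul A (tpow A k)

/-- Max-plus trace. -/
def ttr {n : ℕ} (A : Matrix (Fin n) (Fin n) (WithBot ℝ)) : WithBot ℝ :=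
  Finset.univ.sup fun i => A i i

/-- `Tr(A) = tr A ⊕ tr A² ⊕ ⋯ ⊕ tr Aⁿ`. -/
def TrOp {n : ℕ} (A : Matrix (Fin n) (Fin n) (WithBot ℝ)) : WithBot ℝ :=
  (Finset.Icc 1 n).sup fun m => ttr (tpow A m)

/-- Kleene star `A* = I ⊕ A ⊕ ⋯ ⊕ A^(n-1)`. -/
def kstar {n : ℕ} (A : Matrix (Fin n) (Fin n) (WithBot ℝ)) : Matrix (Fin n) (Fin n) (WithBot ℝ) :=
  fun i j => (Finset.range n).sup fun k => tpow A k i j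

/-- Max-plus spectral radius `λ = ⊕_{m=1}^n (tr A^m)^(1/m)`. -/
def specRad {n : ℕ} (A : Matrix (Fin n) (Fin n) (WithBot ℝ)) : WithBot ℝ :=
  (Finset.Icc 1 n).sup fun m => trt (ttr (tpow A m)) m

/-- `prodAB A B [i₁, …, i_k] = A B^{i₁} A B^{i₂} ⋯ A B^{i_k}`. -/
def prodAB {n : ℕ} (A B : Matrix (Fin n) (Fin n) (WithBot ℝ)) :
    List ℕ → Matrix (Fin n) (Fin n) (WithBot ℝ)
  | [] => tId
  | i :: t => tmul (tmul A (tpow B i)) (prodAB A B t)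

/-- The all-ones (all-`𝟙 = 0`) vector. -/
def onesV (n : ℕ) : Fin n → WithBot ℝ := fun _ => 0

end MaxPlus

open MaxPlus

/-!
For regular `x` put `s = q⁻ A x` and `t = (A x)⁻ p`. Residuation gives `x ≤ s (q⁻ A)⁻`, hence
`A x ≤ s A (q⁻ A)⁻`, and conjugating, `t ≥ s⁻ Δ²`; so `Δ² ≤ s t ≤ (s ⊕ t)²`, while `x ≥ g` gives
`s ≥ q⁻ A g`. Thus `μ` is a lower bound. At `x = μ (q⁻ A)⁻` the first term is at most `μ` because
`q⁻ A (q⁻ A)⁻ ≤ 𝟙`, and the second is `μ⁻ Δ² ≤ μ`.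
-/

namespace MaxPlus

variable {m n : ℕ}

@[simp] lemma tinv_bot : tinv ⊥ = ⊥ := rfl

@[simp] lemma tinv_coe (r : ℝ) : tinv r = ((-r : ℝ) : WithBot ℝ) := rfl

lemma tinv_ne_bot {a : WithBot ℝ} (h : a ≠ ⊥) : tinv a ≠ ⊥ := by
  induction a <;> simp_all

lemma tinv_add (a b : WithBot ℝ) : tinv (a + b) = tinv a + tinv b := by
  induction a <;> induction b <;> simp [← WithBot.coe_add, add_comm]

lemma add_tinv_le_zero (a : WithBot ℝ) : a + tinv a ≤ 0 := by
  induction a <;> simp [← WithBot.coe_add]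

lemma add_tinv_cancel {a : WithBot ℝ} (h : a ≠ ⊥) : a + tinv a = 0 := by
  induction a <;> simp_all [← WithBot.coe_add]

lemma tinv_le_tinv {a b : WithBot ℝ} (ha : a ≠ ⊥) (h : a ≤ b) : tinv b ≤ tinv a := by
  induction a <;> induction b <;> simp_all

lemma le_add_tinv_iff {a b c : WithBot ℝ} (hb : b ≠ ⊥) : a ≤ c + tinv b ↔ a + b ≤ c := by
  induction b with
  | bot => exact absurd rfl hb
  | coe b => induction a <;> induction c <;> simp [← WithBot.coe_add]

lemma trt_ne_bot {a : WithBot ℝ} (h : a ≠ ⊥) (k : ℕ) : trt a k ≠ ⊥ := by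
  induction a <;> simp_all [trt]

lemma trt_two_le_sup_of_le_add {a b c : WithBot ℝ} (h : a ≤ b + c) : trt a 2 ≤ b ⊔ c := by
  induction a with
  | bot => exact bot_le
  | coe a =>
    induction b <;> induction c <;> simp_all [trt, ← WithBot.coe_add]
    by_contra! hlt
    linarith [hlt.1, hlt.2]

lemma le_add_self_of_trt_two_le {a b : WithBot ℝ} (h : trt a 2 ≤ b) : a ≤ b + b := by
  induction a with
  | bot => exact bot_le
  | coe a =>
    induction b <;> simp_all [trt, ← WithBot.coe_add]
    linarith

lemma add_finset_sup {ι : Type*} (s : Finset ι) (c : WithBot ℝ) (f : ι → WithBot ℝ) :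
    c + s.sup f = s.sup fun i => c + f i :=
  Finset.apply_sup_eq_sup_comp (c + ·) (fun _ _ => (max_add_add_left _ _ _).symm)
    (WithBot.add_bot c)

lemma add_le_cdot (q x : Fin n → WithBot ℝ) (i : Fin n) : tinv (q i) + x i ≤ cdot q x :=
  Finset.le_sup (f := fun i => tinv (q i) + x i) (Finset.mem_univ i)

lemma cdot_le_iff {q x : Fin n → WithBot ℝ} {c : WithBot ℝ} :
    cdot q x ≤ c ↔ ∀ i, tinv (q i) + x i ≤ c := by
  simp [cdot]

lemma cdot_ne_bot {q x : Fin n → WithBot ℝ} {i : Fin n} (hq : q i ≠ ⊥) (hx : x i ≠ ⊥) :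
    cdot q x ≠ ⊥ :=
  ne_bot_of_le_ne_bot (WithBot.add_ne_bot.2 ⟨tinv_ne_bot hq, hx⟩) (add_le_cdot q x i)

lemma cdot_mono {q x y : Fin n → WithBot ℝ} (h : ∀ i, x i ≤ y i) : cdot q x ≤ cdot q y :=
  cdot_le_iff.2 fun i => (add_le_add_right (h i) _).trans (add_le_cdot q y i)

lemma cdot_const_add (q x : Fin n → WithBot ℝ) (c : WithBot ℝ) :
    cdot q (fun i => c + x i) = c + cdot q x := by
  simp only [cdot, add_finset_sup, add_left_comm c]

lemma le_mulVec (A : Matrix (Fin m) (Fin n) (WithBot ℝ)) (x : Fin n → WithBot ℝ) (i : Fin m)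
    (j : Fin n) : A i j + x j ≤ mulVec A x i :=
  Finset.le_sup (f := fun j => A i j + x j) (Finset.mem_univ j)

lemma mulVec_ne_bot {A : Matrix (Fin m) (Fin n) (WithBot ℝ)} {x : Fin n → WithBot ℝ} {i : Fin m}
    {j : Fin n} (hA : A i j ≠ ⊥) (hx : x j ≠ ⊥) : mulVec A x i ≠ ⊥ :=
  ne_bot_of_le_ne_bot (WithBot.add_ne_bot.2 ⟨hA, hx⟩) (le_mulVec A x i j)

lemma mulVec_mono (A : Matrix (Fin m) (Fin n) (WithBot ℝ)) {x y : Fin n → WithBot ℝ}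
    (h : ∀ j, x j ≤ y j) (i : Fin m) : mulVec A x i ≤ mulVec A y i :=
  Finset.sup_le fun j _ => (add_le_add_right (h j) _).trans (le_mulVec A y i j)

lemma mulVec_const_add (A : Matrix (Fin m) (Fin n) (WithBot ℝ)) (x : Fin n → WithBot ℝ)
    (c : WithBot ℝ) : mulVec A (fun j => c + x j) = fun i => c + mulVec A x i := by
  ext1 i
  simp only [mulVec, add_finset_sup, add_left_comm c]

/-- The row vector `q⁻ A`. -/
def conjVecMul (q : Fin m → WithBot ℝ) (A : Matrix (Fin m) (Fin n) (WithBot ℝ)) :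
    Fin n → WithBot ℝ :=
  fun j => cdot q fun i => A i j

/-- `Δ² = (A (q⁻ A)⁻)⁻ p`. -/
def deltaSq (A : Matrix (Fin m) (Fin n) (WithBot ℝ)) (p q : Fin m → WithBot ℝ) : WithBot ℝ :=
  cdot (mulVec A fun j => tinv (conjVecMul q A j)) p

section Approximation

variable (A : Matrix (Fin m) (Fin n) (WithBot ℝ)) {p q : Fin m → WithBot ℝ}

lemma conjVecMul_reg (hA : ∀ j, ∃ i, A i j ≠ ⊥) (hq : Reg q) : Reg (conjVecMul q A) := fun j =>
  let ⟨_, hi⟩ := hA j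
  cdot_ne_bot (hq _) hi

lemma deltaSq_ne_bot (hA : ∀ i, ∃ j, A i j ≠ ⊥) (hY : Reg (conjVecMul q A)) (hp : Reg p)
    (i : Fin m) : deltaSq A p q ≠ ⊥ :=
  let ⟨j, hj⟩ := hA i
  cdot_ne_bot (mulVec_ne_bot (x := fun j => tinv (conjVecMul q A j)) hj (tinv_ne_bot (hY j)))
    (hp i)

lemma conjVecMul_add_le_cdot_mulVec (q : Fin m → WithBot ℝ) (x : Fin n → WithBot ℝ) (j : Fin n) :
    conjVecMul q A j + x j ≤ cdot q (mulVec A x) := by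
  rw [add_comm, conjVecMul, cdot, add_finset_sup]
  refine Finset.sup_le fun i _ => ?_
  calc x j + (tinv (q i) + A i j) = tinv (q i) + (A i j + x j) := by ac_rfl
    _ ≤ cdot q (mulVec A x) := (add_le_add_right (le_mulVec A x i j) _).trans (add_le_cdot _ _ i)

lemma le_cdot_mulVec_add_tinv {x : Fin n → WithBot ℝ} {j : Fin n} (hY : conjVecMul q A j ≠ ⊥) :
    x j ≤ cdot q (mulVec A x) + tinv (conjVecMul q A j) :=
  (le_add_tinv_iff hY).2 (add_comm (x j) _ ▸ conjVecMul_add_le_cdot_mulVec A q x j)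

lemma cdot_mulVec_tinv_conjVecMul_le_zero (q : Fin m → WithBot ℝ) :
    cdot q (mulVec A fun j => tinv (conjVecMul q A j)) ≤ 0 := by
  refine cdot_le_iff.2 fun i => ?_
  rw [mulVec, add_finset_sup]
  refine Finset.sup_le fun j _ => ?_
  calc tinv (q i) + (A i j + tinv (conjVecMul q A j))
      = tinv (q i) + A i j + tinv (conjVecMul q A j) := (add_assoc _ _ _).symm
    _ ≤ conjVecMul q A j + tinv (conjVecMul q A j) :=
        add_le_add_left (add_le_cdot q (fun i => A i j) i) _
    _ ≤ 0 := add_tinv_le_zero _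

lemma deltaSq_le_add (hA : ∀ i, ∃ j, A i j ≠ ⊥) (hq : Reg q) (hY : Reg (conjVecMul q A))
    {x : Fin n → WithBot ℝ} (hx : Reg x) :
    deltaSq A p q ≤ cdot q (mulVec A x) + cdot (mulVec A x) p := by
  set s := cdot q (mulVec A x)
  set W := mulVec A fun j => tinv (conjVecMul q A j)
  have hAx : ∀ i, mulVec A x i ≤ s + W i := fun i =>
    (mulVec_mono A (fun j => le_cdot_mulVec_add_tinv A (hY j)) i).trans_eq
      (congrFun (mulVec_const_add A _ s) i)
  refine cdot_le_iff.2 fun i => ?_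
  obtain ⟨j, hj⟩ := hA i
  have hAxi : mulVec A x i ≠ ⊥ := mulVec_ne_bot hj (hx j)
  have hs : s ≠ ⊥ := cdot_ne_bot (hq i) hAxi
  calc tinv (W i) + p i = s + (tinv (s + W i) + p i) := by
        rw [tinv_add, add_assoc, ← add_assoc, add_tinv_cancel hs, zero_add]
    _ ≤ s + (tinv (mulVec A x i) + p i) := by grw [tinv_le_tinv hAxi (hAx i)]
    _ ≤ s + cdot (mulVec A x) p := add_le_add_right (add_le_cdot _ p i) s

lemma cdot_mulVec_le_of_trt_deltaSq_le {μ : WithBot ℝ} (hμ : trt (deltaSq A p q) 2 ≤ μ) :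
    cdot (mulVec A fun j => μ + tinv (conjVecMul q A j)) p ≤ μ := by
  rw [mulVec_const_add]
  refine cdot_le_iff.2 fun i => ?_
  calc tinv (μ + mulVec A (fun j => tinv (conjVecMul q A j)) i) + p i
      = tinv μ + (tinv (mulVec A (fun j => tinv (conjVecMul q A j)) i) + p i) := by
        rw [tinv_add, add_assoc]
    _ ≤ tinv μ + (μ + μ) := by
        grw [add_le_cdot _ p i]
        exact add_le_add_right (le_add_self_of_trt_two_le hμ) _
    _ = (μ + tinv μ) + μ := by ac_rfl
    _ ≤ μ := by grw [add_tinv_le_zero, zero_add]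

end Approximation

end MaxPlus

/-- approximation problem with lower-bound constraint `x ≥ g`. -/
theorem stmt_1 {m n : ℕ} (A : Matrix (Fin m) (Fin n) (WithBot ℝ))
    (hA : (∀ i, ∃ j, A i j ≠ ⊥) ∧ (∀ j, ∃ i, A i j ≠ ⊥))
    (p q : Fin m → WithBot ℝ) (hp : Reg p) (hq : Reg q)
    (g : Fin n → WithBot ℝ)
    (μ : WithBot ℝ)
    (hμ : μ =
      trt (cdot (mulVec A (fun j => tinv (Finset.univ.sup fun i => tinv (q i) + A i j))) p) 2
        ⊔ cdot q (mulVec A g)) :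
    (∀ x : Fin n → WithBot ℝ, Reg x → (∀ i, g i ≤ x i) →
        μ ≤ cdot q (mulVec A x) ⊔ cdot (mulVec A x) p) ∧
      Reg (fun j => μ + tinv (Finset.univ.sup fun i => tinv (q i) + A i j)) ∧
      (∀ j, g j ≤ μ + tinv (Finset.univ.sup fun i => tinv (q i) + A i j)) ∧
      cdot q (mulVec A (fun j => μ + tinv (Finset.univ.sup fun i => tinv (q i) + A i j)))
          ⊔ cdot (mulVec A (fun j => μ + tinv (Finset.univ.sup fun i => tinv (q i) + A i j))) p
        = μ := by
  obtain ⟨hArow, hAcol⟩ := hA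
  have hYdef : ∀ j, (Finset.univ.sup fun i => tinv (q i) + A i j) = conjVecMul q A j :=
    fun _ => rfl
  simp only [hYdef]
  change μ = trt (deltaSq A p q) 2 ⊔ cdot q (mulVec A g) at hμ
  have hY := conjVecMul_reg A hAcol hq
  have hΔ : trt (deltaSq A p q) 2 ≤ μ := hμ ▸ le_sup_left
  have lower (x : Fin n → WithBot ℝ) (hx : Reg x) (hgx : ∀ i, g i ≤ x i) :
      μ ≤ cdot q (mulVec A x) ⊔ cdot (mulVec A x) p :=
    hμ ▸ sup_le (trt_two_le_sup_of_le_add (deltaSq_le_add A hArow hq hY hx))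
      ((cdot_mono (mulVec_mono A hgx)).trans le_sup_left)
  have hreg : Reg fun j => μ + tinv (conjVecMul q A j) := fun j => by
    obtain ⟨i, -⟩ := hAcol j
    exact WithBot.add_ne_bot.2
      ⟨ne_bot_of_le_ne_bot (trt_ne_bot (deltaSq_ne_bot A hArow hY hp i) 2) hΔ, tinv_ne_bot (hY j)⟩
  have hge (j : Fin n) : g j ≤ μ + tinv (conjVecMul q A j) :=
    (le_cdot_mulVec_add_tinv A (hY j)).trans (add_le_add_left (hμ ▸ le_sup_right) _)
  refine ⟨lower, hreg, hge, le_antisymm (sup_le ?_ (cdot_mulVec_le_of_trt_deltaSq_le A hΔ))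
    (lower _ hreg hge)⟩
  rw [mulVec_const_add, cdot_const_add]
  grw [cdot_mulVec_tinv_conjVecMul_le_zero, add_zero]
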